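/- Let d ∈ ℕ, c ≥ 0, m ∈ ℕ₀, ε > 0, C > 0, R > e_m, and define ψ^u_{c,m}(x) := |x|^{-c/2-d/2-ε/2} if m = 0 and ψ^u_{c,m}(x) := |x|^{-c/2-d/2} ∏_{j=1}^m (ln_j(|x|))^{-1/2} (ln_m(|x|))^{-ε/2} if m ≥ 1. If ψ ∈ L²(ℝ^d) satisfies |ψ(x)| ≤ C ψ^u_{c,m}(x) for almost every |x| > R, then ∫_{ℝ^d} |x|^{c̃} |ψ(x)|² dx < ∞ for every c̃ with 0 ≤ c̃ ≤ c. -/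

import Mathlib

open MeasureTheory Real Filter Finset
open scoped RealInnerProductSpace ENNReal Topology

/-- Iterated exponential: `iterExp 0 = 0`, `iterExp (n+1) = exp (iterExp n)`
(the `e_n` of the paper). -/
noncomputable def iterExp : ℕ → ℝ
  | 0 => 0
  | n + 1 => Real.exp (iterExp n)

/-- Iterated logarithm: `iterLog 1 r = log r`, `iterLog (n+1) r = log (iterLog n r)`
(the `ln_n` of the paper). -/
noncomputable def iterLog : ℕ → ℝ → ℝ
  | 0, r => r
  | n + 1, r => Real.log (iterLog n r)

/-- `ψᵘ_{c,m}` : for `m = 0` it is `|x|^{-c/2-d/2-ε/2}`, and for `m ≥ 1` it is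
`|x|^{-c/2-d/2} ∏_{j=1}^m (ln_j |x|)^{-1/2} · (ln_m |x|)^{-ε/2}`. -/
noncomputable def psiU (d : ℕ) (c ε : ℝ) (m : ℕ) (x : EuclideanSpace ℝ (Fin d)) : ℝ :=
  if m = 0 then ‖x‖ ^ (-(c / 2) - (d : ℝ) / 2 - ε / 2)
  else ‖x‖ ^ (-(c / 2) - (d : ℝ) / 2) * (∏ j ∈ Finset.Icc 1 m, (iterLog j ‖x‖) ^ (-(1 : ℝ) / 2))
        * (iterLog m ‖x‖) ^ (-(ε / 2))

/-!
Outside a ball of radius `max R 1`, the bound gives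
`‖x‖ ^ c̃ * ψ x ^ 2 ≤ C² ‖x‖ ^ (c̃ - c) (ψᵘ_{0,m})²` with `‖x‖ ^ (c̃ - c) ≤ 1`. In polar
coordinates `(ψᵘ_{0,m})²` has radial density
`r ^ (d - 1) (ψᵘ_{0,m})² = ∏_{j=0}^{m} (ln_j r)⁻¹ · (ln_m r) ^ (-ε)`, the derivative of
`-ε⁻¹ (ln_m r) ^ (-ε)`, which tends to `0` at infinity; so it is integrable. On the ball,
`‖x‖ ^ c̃` is bounded and `ψ ^ 2` is integrable.
-/

lemma iterExp_nonneg (n : ℕ) : 0 ≤ iterExp n := by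
  cases n with
  | zero => exact le_rfl
  | succ n => exact (exp_pos _).le

lemma iterExp_lt_iterExp_succ (n : ℕ) : iterExp n < iterExp (n + 1) := by
  have := add_one_le_exp (iterExp n)
  simp only [iterExp]
  linarith

lemma iterExp_sub_lt_iterLog {m j : ℕ} (hj : j ≤ m) {r : ℝ} (hr : iterExp m < r) :
    iterExp (m - j) < iterLog j r := by
  induction j with
  | zero => exact hr
  | succ j ih =>
    have hmj : m - j = m - (j + 1) + 1 := by omega
    have h := ih (by omega)
    rw [hmj] at h
    simpa only [iterLog, iterExp, log_exp] using log_lt_log (exp_pos _) h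

lemma iterLog_pos {m j : ℕ} (hj : j ≤ m) {r : ℝ} (hr : iterExp m < r) : 0 < iterLog j r :=
  (iterExp_nonneg _).trans_lt (iterExp_sub_lt_iterLog hj hr)

lemma tendsto_iterLog_atTop (n : ℕ) : Tendsto (iterLog n) atTop atTop := by
  induction n with
  | zero => exact tendsto_id
  | succ n ih => exact tendsto_log_atTop.comp ih

lemma hasDerivAt_iterLog (n : ℕ) {r : ℝ} (hr : iterExp n < r) :
    HasDerivAt (iterLog n) (∏ j ∈ range n, (iterLog j r)⁻¹) r := by
  induction n with
  | zero => simpa [iterLog] using hasDerivAt_id' r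
  | succ n ih =>
    have hpos : 0 < iterLog n r := iterLog_pos n.le_succ hr
    rw [prod_range_succ, ← div_eq_mul_inv]
    exact (ih ((iterExp_lt_iterExp_succ n).trans hr)).log hpos.ne'

lemma integrableOn_Ioi_prod_inv_iterLog_mul_rpow {m : ℕ} {ε R : ℝ} (hε : 0 < ε)
    (hR : iterExp m < R) :
    IntegrableOn (fun r ↦ (∏ j ∈ range (m + 1), (iterLog j r)⁻¹) * iterLog m r ^ (-ε))
      (Set.Ioi R) := by
  have hderiv : ∀ r ∈ Set.Ici R, HasDerivAt (fun r ↦ -ε⁻¹ * iterLog m r ^ (-ε))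
      ((∏ j ∈ range (m + 1), (iterLog j r)⁻¹) * iterLog m r ^ (-ε)) r := by
    intro r hr
    have hrm : iterExp m < r := hR.trans_le hr
    have hL : 0 < iterLog m r := iterLog_pos le_rfl hrm
    refine (((hasDerivAt_iterLog m hrm).rpow_const (p := -ε) (Or.inl hL.ne')).const_mul
      (-ε⁻¹)).congr_deriv ?_
    rw [prod_range_succ, sub_eq_add_neg, rpow_add hL, rpow_neg_one]
    field_simp
  refine integrableOn_Ioi_deriv_of_nonneg' hderiv (fun r hr ↦ ?_) (l := 0) ?_
  · have hrm : iterExp m < r := hR.trans hr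
    exact mul_nonneg (prod_nonneg fun _ hj ↦
      (inv_pos.mpr (iterLog_pos (mem_range_succ_iff.mp hj) hrm)).le)
      (rpow_nonneg (iterLog_pos le_rfl hrm).le _)
  · simpa using ((tendsto_rpow_neg_atTop hε).comp (tendsto_iterLog_atTop m)).const_mul (-ε⁻¹)

lemma integrableOn_compl_closedBall_fun_norm_addHaar {E F : Type*} [NormedAddCommGroup E]
    [NormedSpace ℝ E] [MeasurableSpace E] [BorelSpace E] [FiniteDimensional ℝ E] [Nontrivial E]
    (μ : Measure E) [μ.IsAddHaarMeasure] [NormedAddCommGroup F] [NormedSpace ℝ F]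
    {f : ℝ → F} {R : ℝ}
    (hf : IntegrableOn (fun y ↦ y ^ (Module.finrank ℝ E - 1) • f y) (Set.Ioi R)) :
    IntegrableOn (fun x ↦ f ‖x‖) (Metric.closedBall (0 : E) R)ᶜ μ := by
  rw [← integrable_indicator_iff measurableSet_closedBall.compl]
  have hind : (Metric.closedBall (0 : E) R)ᶜ.indicator (fun x ↦ f ‖x‖)
      = fun x ↦ (Set.Ioi R).indicator f ‖x‖ := by
    ext x
    simp [Set.indicator]
  rw [hind, integrable_fun_norm_addHaar μ]
  refine (integrable_indicator_iff measurableSet_Ioi |>.mpr hf).integrableOn.congr_fun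
    (fun y (hy : 0 < y) ↦ ?_) measurableSet_Ioi
  by_cases hyR : R < y <;> simp [hyR]

noncomputable def psiUSqProfile (d m : ℕ) (ε r : ℝ) : ℝ :=
  r ^ (-(d : ℝ)) * (∏ j ∈ Icc 1 m, (iterLog j r)⁻¹) * iterLog m r ^ (-ε)

lemma psiUSqProfile_nonneg (d : ℕ) {m : ℕ} (ε : ℝ) {r : ℝ} (hr : iterExp m < r) :
    0 ≤ psiUSqProfile d m ε r :=
  mul_nonneg (mul_nonneg (rpow_nonneg (iterLog_pos m.zero_le hr).le _)
    (prod_nonneg fun _ hj ↦ (inv_pos.mpr (iterLog_pos (mem_Icc.mp hj).2 hr)).le))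
    (rpow_nonneg (iterLog_pos le_rfl hr).le _)

lemma pow_mul_psiUSqProfile {d m : ℕ} (hd : 0 < d) (ε : ℝ) {r : ℝ} (hr : iterExp m < r) :
    r ^ (d - 1) * psiUSqProfile d m ε r
      = (∏ j ∈ range (m + 1), (iterLog j r)⁻¹) * iterLog m r ^ (-ε) := by
  have hr0 : 0 < r := (iterExp_nonneg m).trans_lt hr
  have hpow : r ^ (d - 1) * r ^ (-(d : ℝ)) = r⁻¹ := by
    rw [← rpow_natCast, ← rpow_add hr0, Nat.cast_sub hd, ← rpow_neg_one]
    congr 1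
    push_cast
    ring
  rw [range_eq_Ico, prod_eq_prod_Ico_succ_bot m.succ_pos, zero_add, Nat.succ_eq_add_one,
    Ico_add_one_right_eq_Icc, psiUSqProfile, show iterLog 0 r = r from rfl, ← hpow]
  ring

lemma integrableOn_compl_closedBall_psiUSqProfile {d m : ℕ} (hd : 0 < d) {ε R : ℝ} (hε : 0 < ε)
    (hR : iterExp m < R) :
    IntegrableOn (fun x : EuclideanSpace ℝ (Fin d) ↦ psiUSqProfile d m ε ‖x‖)
      (Metric.closedBall 0 R)ᶜ := by
  have : Nonempty (Fin d) := ⟨⟨0, hd⟩⟩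
  refine integrableOn_compl_closedBall_fun_norm_addHaar volume <|
    (integrableOn_Ioi_prod_inv_iterLog_mul_rpow hε hR).congr_fun (fun r hr ↦ ?_) measurableSet_Ioi
  rw [finrank_euclideanSpace_fin, smul_eq_mul, pow_mul_psiUSqProfile hd ε (hR.trans hr)]

lemma sq_psiU {d m : ℕ} (c ε : ℝ) {x : EuclideanSpace ℝ (Fin d)} (hx : iterExp m < ‖x‖) :
    psiU d c ε m x ^ 2 = ‖x‖ ^ (-c) * psiUSqProfile d m ε ‖x‖ := by
  have hx0 : 0 < ‖x‖ := (iterExp_nonneg m).trans_lt hx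
  have sq_rpow : ∀ {y : ℝ}, 0 ≤ y → ∀ p : ℝ, (y ^ p) ^ 2 = y ^ (2 * p) := fun hy p ↦ by
    rw [← rpow_natCast, ← rpow_mul hy, mul_comm]
    norm_num
  unfold psiU psiUSqProfile
  split_ifs with hm
  · subst hm
    rw [Icc_eq_empty (by omega), prod_empty, sq_rpow hx0.le, show iterLog 0 ‖x‖ = ‖x‖ from rfl,
      mul_one, ← rpow_add hx0, ← rpow_add hx0]
    congr 1
    ring
  · have hsq_inv : ∀ j ∈ Icc 1 m, (iterLog j ‖x‖ ^ (-(1 : ℝ) / 2)) ^ 2 = (iterLog j ‖x‖)⁻¹ :=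
      fun j hj ↦ by
        rw [sq_rpow (iterLog_pos (mem_Icc.mp hj).2 hx).le, ← rpow_neg_one]
        norm_num
    rw [mul_pow, mul_pow, sq_rpow hx0.le, sq_rpow (iterLog_pos le_rfl hx).le, ← prod_pow,
      prod_congr rfl hsq_inv, show 2 * (-(c / 2) - (d : ℝ) / 2) = -c + -d by ring,
      show 2 * -(ε / 2) = -ε by ring, rpow_add hx0]
    ring

lemma rpow_mul_sq_le_of_abs_le_psiU {d m : ℕ} {c ct ε C y : ℝ} (hct : ct ≤ c)
    {x : EuclideanSpace ℝ (Fin d)} (hx1 : 1 ≤ ‖x‖) (hx : iterExp m < ‖x‖)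
    (hy : |y| ≤ C * psiU d c ε m x) :
    ‖x‖ ^ ct * y ^ 2 ≤ C ^ 2 * psiUSqProfile d m ε ‖x‖ := by
  have hy_sq : y ^ 2 ≤ C ^ 2 * psiU d c ε m x ^ 2 := by
    rw [← mul_pow, ← sq_abs]
    exact pow_le_pow_left₀ (abs_nonneg y) hy 2
  have hweight : ‖x‖ ^ ct * ‖x‖ ^ (-c) ≤ 1 := by
    rw [← rpow_add (by linarith)]
    exact rpow_le_one_of_one_le_of_nonpos hx1 (by linarith)
  calc ‖x‖ ^ ct * y ^ 2 ≤ ‖x‖ ^ ct * (C ^ 2 * psiU d c ε m x ^ 2) := by gcongr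
    _ = C ^ 2 * (‖x‖ ^ ct * ‖x‖ ^ (-c) * psiUSqProfile d m ε ‖x‖) := by rw [sq_psiU c ε hx]; ring
    _ ≤ C ^ 2 * psiUSqProfile d m ε ‖x‖ := by
      gcongr
      exact mul_le_of_le_one_left (psiUSqProfile_nonneg d ε hx) hweight

theorem moment_finite_of_upper_bound_general (d : ℕ) (hd : 0 < d) (c : ℝ)
    (m : ℕ) (ε : ℝ) (hε : 0 < ε) (C : ℝ) (R : ℝ) (hR : iterExp m < R)
    (ψ : EuclideanSpace ℝ (Fin d) → ℝ) (hψ : MemLp ψ 2 volume)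
    (hbd : ∀ᵐ x ∂(volume : Measure (EuclideanSpace ℝ (Fin d))),
      R < ‖x‖ → |ψ x| ≤ C * psiU d c ε m x) :
    ∀ ct : ℝ, 0 ≤ ct → ct ≤ c →
      Integrable (fun x : EuclideanSpace ℝ (Fin d) => ‖x‖ ^ ct * (ψ x) ^ 2) := by
  intro ct hct0 hctc
  set R' := max R 1
  have hR' : iterExp m < R' := hR.trans_le (le_max_left _ _)
  have hweight : Continuous fun x : EuclideanSpace ℝ (Fin d) ↦ ‖x‖ ^ ct :=
    continuous_norm.rpow_const fun _ ↦ Or.inr hct0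
  have hinner : IntegrableOn (fun x ↦ ‖x‖ ^ ct * ψ x ^ 2) (Metric.closedBall 0 R') :=
    hψ.integrable_sq.integrableOn.continuousOn_mul hweight.continuousOn (isCompact_closedBall 0 R')
  have houter : IntegrableOn (fun x ↦ ‖x‖ ^ ct * ψ x ^ 2) (Metric.closedBall 0 R')ᶜ := by
    refine ((integrableOn_compl_closedBall_psiUSqProfile hd hε hR').const_mul (C ^ 2)).mono'
      (hweight.aestronglyMeasurable.mul hψ.integrable_sq.aestronglyMeasurable).restrict ?_
    filter_upwards [ae_restrict_mem measurableSet_closedBall.compl, ae_restrict_of_ae hbd]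
      with x hx hψx
    have hxR' : R' < ‖x‖ := by simpa using hx
    rw [norm_of_nonneg (by positivity)]
    exact rpow_mul_sq_le_of_abs_le_psiU hctc ((le_max_right _ _).trans hxR'.le)
      (hR'.trans hxR') (hψx ((le_max_left _ _).trans_lt hxR'))
  simpa using hinner.union houter

/-- If `ψ ∈ L²(ℝ^d)` and `|ψ(x)| ≤ C ψᵘ_{c,m}(x)` for a.e. `|x| > R`, then `ψ` has
finite `c̃`-th moment for every `0 ≤ c̃ ≤ c`. -/
theorem moment_finite_of_upper_bound (d : ℕ) (hd : 0 < d) (c : ℝ) (hc : 0 ≤ c)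
    (m : ℕ) (ε : ℝ) (hε : 0 < ε) (C : ℝ) (hC : 0 < C) (R : ℝ) (hR : iterExp m < R)
    (ψ : EuclideanSpace ℝ (Fin d) → ℝ) (hψ : MemLp ψ 2 volume)
    (hbd : ∀ᵐ x ∂(volume : Measure (EuclideanSpace ℝ (Fin d))),
      R < ‖x‖ → |ψ x| ≤ C * psiU d c ε m x) :
    ∀ ct : ℝ, 0 ≤ ct → ct ≤ c →
      Integrable (fun x : EuclideanSpace ℝ (Fin d) => ‖x‖ ^ ct * (ψ x) ^ 2) :=
  moment_finite_of_upper_bound_general d hd c m ε hε C R hR ψ hψ hbd
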